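/- The explicit 4×4 real matrices T₀, U₀, A₀, L₀ (holonomy generators for Bi(3) in SO(3,1)) each preserve the quadratic form of signature (3,1) given by J = diag(1,1,1,-1): for each generator M, Mᵀ J M = J, and det M = 1. -/

import Mathlib

open Matrix

noncomputable section

/-- The holonomy generators for Bi(3) in SO(3,1). -/
def T₀ : Matrix (Fin 4) (Fin 4) ℝ :=
  !![3/2, -1/2, 1, 0; 1/2, 1/2, 1, 0; 1, -1, 1, 0; 0, 0, 0, 1]

def U₀ : Matrix (Fin 4) (Fin 4) ℝ :=
  !![3/2, -1/2, 1/2, Real.sqrt 3 / 2;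
     1/2, 1/2, 1/2, Real.sqrt 3 / 2;
     1/2, -1/2, 1, 0;
     Real.sqrt 3 / 2, -(Real.sqrt 3) / 2, 0, 1]

def A₀ : Matrix (Fin 4) (Fin 4) ℝ :=
  !![1, 0, 0, 0; 0, -1, 0, 0; 0, 0, -1, 0; 0, 0, 0, 1]

def L₀ : Matrix (Fin 4) (Fin 4) ℝ :=
  !![1, 0, 0, 0; 0, 1, 0, 0;
     0, 0, -1/2, Real.sqrt 3 / 2;
     0, 0, -(Real.sqrt 3) / 2, -1/2]

def Jmat : Matrix (Fin 4) (Fin 4) ℝ :=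
  !![-1, 0, 0, 0; 0, 1, 0, 0; 0, 0, 1, 0; 0, 0, 0, 1]

def Pmat : Matrix (Fin 4) (Fin 4) ℝ :=
  !![0, 0, 0, 1; 0, 1, 0, 0; 0, 0, 1, 0; 1, 0, 0, 0]

lemma sqrt3_sq : Real.sqrt 3 * Real.sqrt 3 = 3 :=
  Real.mul_self_sqrt (by norm_num)

set_option maxHeartbeats 2000000 in
/-- there is a real symmetric invertible matrix J of signature (3,1)
(i.e. congruent to diag(1,1,1,-1)) preserved by all four holonomy generators, each of
which has determinant 1: MᵀJM = J and det M = 1. -/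
theorem holonomy_preserves_form_31 :
    ∃ J : Matrix (Fin 4) (Fin 4) ℝ, J.IsSymm ∧ IsUnit J ∧
      (∃ P : Matrix (Fin 4) (Fin 4) ℝ, IsUnit P ∧
        Pᵀ * J * P = Matrix.diagonal ![1, 1, 1, -1]) ∧
      ∀ M ∈ ({T₀, U₀, A₀, L₀} : Set (Matrix (Fin 4) (Fin 4) ℝ)),
        Mᵀ * J * M = J ∧ M.det = 1 := by
  have h3 := sqrt3_sq
  refine ⟨Jmat, ?_, ?_, ⟨Pmat, ?_, ?_⟩, ?_⟩
  · ext i j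
    fin_cases i <;> fin_cases j <;>
      simp [Jmat, Matrix.IsSymm, Matrix.vecHead, Matrix.vecTail]
  · have hJJ : Jmat * Jmat = 1 := by
      ext i j
      fin_cases i <;> fin_cases j <;>
        simp [Jmat, Matrix.mul_apply, Fin.sum_univ_four, Matrix.vecHead, Matrix.vecTail]
    exact ⟨⟨Jmat, Jmat, hJJ, hJJ⟩, rfl⟩
  · have hPP : Pmat * Pmat = 1 := by
      ext i j
      fin_cases i <;> fin_cases j <;>
        simp [Pmat, Matrix.mul_apply, Fin.sum_univ_four, Matrix.vecHead, Matrix.vecTail]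
    exact ⟨⟨Pmat, Pmat, hPP, hPP⟩, rfl⟩
  · ext i j
    fin_cases i <;> fin_cases j <;>
      simp [Pmat, Jmat, Matrix.mul_apply, Fin.sum_univ_four, Matrix.diagonal,
        Matrix.vecHead, Matrix.vecTail]
  · intro M hM
    rcases hM with h | h | h | h <;> subst h <;> constructor
    · ext i j
      fin_cases i <;> fin_cases j <;>
        simp [T₀, Jmat, Matrix.mul_apply, Fin.sum_univ_four, Matrix.vecHead,
          Matrix.vecTail] <;> ring
    · simp [T₀, Matrix.det_succ_row_zero, Fin.sum_univ_succ, Fin.succAbove, Fin.castSucc, Fin.castAdd, Fin.castLE]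
      ring
    · ext i j
      fin_cases i <;> fin_cases j <;>
        simp [U₀, Jmat, Matrix.mul_apply, Fin.sum_univ_four, Matrix.vecHead,
          Matrix.vecTail] <;>
        nlinarith [h3]
    · simp [U₀, Matrix.det_succ_row_zero, Fin.sum_univ_succ, Fin.succAbove, Fin.castSucc, Fin.castAdd, Fin.castLE]
      nlinarith [h3]
    · ext i j
      fin_cases i <;> fin_cases j <;>
        simp [A₀, Jmat, Matrix.mul_apply, Fin.sum_univ_four, Matrix.vecHead, Matrix.vecTail]
    · simp [A₀, Matrix.det_succ_row_zero, Fin.sum_univ_succ, Fin.succAbove, Fin.castSucc, Fin.castAdd, Fin.castLE]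
    · ext i j
      fin_cases i <;> fin_cases j <;>
        simp [L₀, Jmat, Matrix.mul_apply, Fin.sum_univ_four, Matrix.vecHead,
          Matrix.vecTail] <;>
        nlinarith [h3]
    · simp [L₀, Matrix.det_succ_row_zero, Fin.sum_univ_succ, Fin.succAbove, Fin.castSucc, Fin.castAdd, Fin.castLE]
      nlinarith [h3]

end
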